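/- arXiv:2111.06600 — 5 statements merged into one kernel-verified Lean document; each statement's English description precedes it below -/
import Mathlib

section
/- Let n ≥ 1 be an integer and f a C² positive function on (0,∞) with f(r) ~ D rⁿ as r → 0⁺ (D > 0) solving f'' + f'/r - (n²/r²)f = f[β₁(f² - 1) + β'g²] where g is continuous and bounded. If there is a smallest r' > 0 with f(r') = 1 and f' > 0 on (0,r'), then f'(r) > 0 for all r > r'. In particular f stays above 1 after first reaching 1. -/
open Set Filter Topology

/-!
Write `F = f'`. Since `f(r') = 1` and `f` increases up to `r'`, `F(r') ≥ 0`. Suppose `F` fails to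
stay positive after `r'`, and let `s ≥ r'` be its first zero there. Then `f` increases on
`[r', s]`, so `f(s) ≥ 1`, and the equation at `s` reads
`F'(s) = n² f(s) / s² + f(s) (β₁ (f(s)² - 1) + β' g(s)²) > 0`.
A function vanishing with positive derivative is negative just to the left of the zero and
positive just to the right of it, which contradicts the choice of `s`.
-/

lemma eventually_neg_nhdsLT_of_deriv_pos {F : ℝ → ℝ} {x : ℝ} (hx : F x = 0)
    (hF' : 0 < deriv F x) : ∀ᶠ y in 𝓝[<] x, F y < 0 := by
  filter_upwards [nhdsWithin_le_nhds (eventually_nhdsWithin_sign_eq_of_deriv_pos hF' hx),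
    self_mem_nhdsWithin] with y hy (hyx : y < x)
  rwa [sign_neg (sub_neg.2 hyx), sign_eq_neg_one_iff] at hy

lemma eventually_pos_nhdsGT_of_deriv_pos {F : ℝ → ℝ} {x : ℝ} (hx : F x = 0)
    (hF' : 0 < deriv F x) : ∀ᶠ y in 𝓝[>] x, 0 < F y := by
  filter_upwards [nhdsWithin_le_nhds (eventually_nhdsWithin_sign_eq_of_deriv_pos hF' hx),
    self_mem_nhdsWithin] with y hy (hxy : x < y)
  rwa [sign_pos (sub_pos.2 hxy), sign_eq_one_iff] at hy

lemma eventually_pos_nhdsGT_of_nonneg_of_deriv_pos {F : ℝ → ℝ} {a : ℝ}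
    (hF : ContinuousWithinAt F (Ici a) a)
    (ha : 0 ≤ F a) (hzero : F a = 0 → 0 < deriv F a) : ∀ᶠ y in 𝓝[>] a, 0 < F y := by
  rcases ha.eq_or_lt with h | h
  · exact eventually_pos_nhdsGT_of_deriv_pos h.symm (hzero h.symm)
  · exact (hF.mono Ioi_subset_Ici_self).eventually (lt_mem_nhds h)

theorem pos_of_deriv_pos_at_first_zero {F : ℝ → ℝ} {a : ℝ} (hF : ContinuousOn F (Ici a))
    (ha : 0 ≤ F a) (hzero : ∀ x ≥ a, F x = 0 → (∀ y ∈ Ioo a x, 0 < F y) → 0 < deriv F x) :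
    ∀ b > a, 0 < F b := by
  intro b hab
  obtain ⟨c, hac, hc⟩ : ∃ c ∈ Ioi a, Ioc a c ⊆ {y | 0 < F y} :=
    mem_nhdsGT_iff_exists_Ioc_subset.1 <| eventually_pos_nhdsGT_of_nonneg_of_deriv_pos
      (hF a self_mem_Ici) ha fun h => hzero a le_rfl h fun _ hy => (hy.1.not_gt hy.2).elim
  by_contra! hb
  have hcb : c < b := lt_of_not_ge fun hbc => (hc ⟨hab, hbc⟩ : 0 < F b).not_ge hb
  have hFcb : ContinuousOn F (Icc c b) := hF.mono fun y hy => hac.le.trans hy.1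
  set Z := Icc c b ∩ F ⁻¹' Iic 0
  have hZ : IsClosed Z := hFcb.preimage_isClosed_of_isClosed isClosed_Icc isClosed_Iic
  have hZc : BddBelow Z := ⟨c, fun y hy => hy.1.1⟩
  have hsZ : sInf Z ∈ Z := hZ.csInf_mem ⟨b, ⟨hcb.le, le_rfl⟩, hb⟩ hZc
  set s := sInf Z
  have hcs : c ≤ s := hsZ.1.1
  have hpos : ∀ y ∈ Ioo a s, 0 < F y := by
    intro y hy
    rcases le_or_gt y c with hyc | hcy
    · exact hc ⟨hy.1, hyc⟩
    · by_contra! hFy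
      exact (csInf_le hZc (show y ∈ Z from ⟨⟨hcy.le, hy.2.le.trans hsZ.1.2⟩, hFy⟩)).not_gt hy.2
  have hs0 : F s = 0 := by
    obtain ⟨t, ht, hFt⟩ := intermediate_value_Icc' hcs (hFcb.mono (Icc_subset_Icc_right hsZ.1.2))
      (show (0 : ℝ) ∈ Icc (F s) (F c) from ⟨hsZ.2, (hc ⟨hac, le_rfl⟩ : 0 < F c).le⟩)
    have hst : s ≤ t := csInf_le hZc (show t ∈ Z from ⟨⟨ht.1, ht.2.trans hsZ.1.2⟩, hFt.le⟩)
    rwa [le_antisymm ht.2 hst] at hFt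
  have has : a < s := hac.trans_le hcs
  obtain ⟨y, hFy, hy⟩ := ((eventually_neg_nhdsLT_of_deriv_pos hs0
    (hzero s has.le hs0 hpos)).and (Ioo_mem_nhdsLT has)).exists
  exact (hpos y hy).not_gt hFy

theorem deriv_deriv_pos_of_vortex_ode {n : ℕ} (hn : 1 ≤ n) {β₁ β' r : ℝ} {f g : ℝ → ℝ}
    (hβ₁ : 0 ≤ β₁) (hβ' : 0 ≤ β') (hr : 0 < r)
    (hode : deriv (deriv f) r + deriv f r / r - ((n : ℝ) ^ 2 / r ^ 2) * f r
        = f r * (β₁ * ((f r) ^ 2 - 1) + β' * (g r) ^ 2))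
    (hf' : deriv f r = 0) (hf : 1 ≤ f r) : 0 < deriv (deriv f) r := by
  have hn : (0 : ℝ) < n := Nat.cast_pos.2 hn
  have hcentrifugal : 0 < (n : ℝ) ^ 2 / r ^ 2 * f r := by positivity
  have hpotential : 0 ≤ f r * (β₁ * ((f r) ^ 2 - 1) + β' * (g r) ^ 2) := by
    have : 0 ≤ (f r) ^ 2 - 1 := by nlinarith
    positivity
  rw [hf', zero_div, add_zero] at hode
  linarith

theorem tcgl_profile_stays_above_one_general (n : ℕ) (hn : 1 ≤ n) (β₁ β' : ℝ)
    (hβ₁ : 0 < β₁) (hβ' : 0 < β')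
    (g : ℝ → ℝ)
    (f : ℝ → ℝ) (hf_smooth : ContDiffOn ℝ 2 f (Ioi 0))
    (hf_ode : ∀ r ∈ Ioi (0:ℝ),
      deriv (deriv f) r + deriv f r / r - ((n : ℝ) ^ 2 / r ^ 2) * f r
        = f r * (β₁ * ((f r) ^ 2 - 1) + β' * (g r) ^ 2))
    (r' : ℝ) (hr' : 0 < r') (hfr' : f r' = 1)
    (hf'_pos : ∀ r ∈ Ioo (0:ℝ) r', 0 < deriv f r) :
    (∀ r > r', 0 < deriv f r) ∧ ∀ r > r', 1 < f r := by
  have hF : ContinuousOn (deriv f) (Ioi 0) :=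
    hf_smooth.continuousOn_deriv_of_isOpen isOpen_Ioi (by norm_num)
  have hFr' : 0 ≤ deriv f r' :=
    ge_of_tendsto ((hF.continuousAt (isOpen_Ioi.mem_nhds hr')).tendsto.mono_left
      nhdsWithin_le_nhds) (mem_of_superset (Ioo_mem_nhdsLT hr') fun r hr => (hf'_pos r hr).le)
  have hf_mono : ∀ x, (∀ y ∈ Ioo r' x, 0 < deriv f y) → StrictMonoOn f (Icc r' x) :=
    fun x hpos => strictMonoOn_of_deriv_pos (convex_Icc r' x)
      (hf_smooth.continuousOn.mono fun y hy => hr'.trans_le hy.1) (by rwa [interior_Icc])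
  have hpos : ∀ r > r', 0 < deriv f r :=
    pos_of_deriv_pos_at_first_zero (hF.mono (Ici_subset_Ioi.2 hr')) hFr'
      fun x hx hx0 hxpos => deriv_deriv_pos_of_vortex_ode hn hβ₁.le hβ'.le
        (hr'.trans_le hx) (hf_ode x (hr'.trans_le hx)) hx0 <|
          hfr' ▸ (hf_mono x hxpos).monotoneOn (left_mem_Icc.2 hx) (right_mem_Icc.2 hx) hx
  exact ⟨hpos, fun r hr => hfr' ▸
    hf_mono r (fun y hy => hpos y hy.1) (left_mem_Icc.2 hr.le) (right_mem_Icc.2 hr.le) hr⟩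

/-- Once the vortex profile f first reaches 1, its derivative stays positive;
in particular f stays above 1 after first reaching 1. -/
theorem tcgl_profile_stays_above_one (n : ℕ) (hn : 1 ≤ n) (β₁ β' D : ℝ)
    (hβ₁ : 0 < β₁) (hβ' : 0 < β') (hD : 0 < D)
    (g : ℝ → ℝ) (hg_cont : Continuous g) (hg_bd : ∃ M, ∀ r, |g r| ≤ M)
    (f : ℝ → ℝ) (hf_smooth : ContDiffOn ℝ 2 f (Ioi 0))
    (hf_pos : ∀ r ∈ Ioi (0:ℝ), 0 < f r)
    (hf_asym : Tendsto (fun r => f r / r ^ n) (nhdsWithin 0 (Ioi 0)) (nhds D))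
    (hf_ode : ∀ r ∈ Ioi (0:ℝ),
      deriv (deriv f) r + deriv f r / r - ((n : ℝ) ^ 2 / r ^ 2) * f r
        = f r * (β₁ * ((f r) ^ 2 - 1) + β' * (g r) ^ 2))
    (r' : ℝ) (hr' : 0 < r') (hfr' : f r' = 1)
    (hr'_first : ∀ r ∈ Ioo (0:ℝ) r', f r < 1)
    (hf'_pos : ∀ r ∈ Ioo (0:ℝ) r', 0 < deriv f r) :
    (∀ r > r', 0 < deriv f r) ∧ ∀ r > r', 1 < f r :=
  tcgl_profile_stays_above_one_general n hn β₁ β' hβ₁ hβ' g f hf_smooth hf_ode r' hr' hfr' hf'_pos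
end

section
/- Let m ≥ 1, and suppose g is continuous on [0,δ], solves the integral equation g(r) = C rᵐ + (1/(2m)) ∫₀^r (rᵐ/s^{m-1} - s^{m+1}/rᵐ) g(s)(β₂g(s)² - α + β'f(s)²) ds on [0,δ], and satisfies |g(s)/sᵐ| ≤ M and |β₂g(s)² - α + β'f(s)²| ≤ M̂ for s ∈ [0,δ]. Then |g(r) - C rᵐ| ≤ (M M̂)/(4m) r^{m+2} for all r ∈ [0,δ]. -/
/-!
Pulling the weight `sᵐ` out of `g s` turns the kernel into `s rᵐ (1 - s²ᵐ/r²ᵐ)`, which lies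
between `0` and `s rᵐ` for `0 < s ≤ r`. Hence the integrand is bounded by `M M̂ rᵐ s`, whose
integral over `[0, r]` is `M M̂ r^(m+2)/2`; the factor `1/(2m)` gives the constant.
-/

open Set intervalIntegral

/-- The kernel of the variation-of-constants formula for `g'' + g'/r - (m²/r²) g`. -/
noncomputable def radialKernel (m : ℕ) (r s : ℝ) : ℝ :=
  r ^ m / s ^ (m - 1) - s ^ (m + 1) / r ^ m

section RadialKernel

variable {m : ℕ} {r s : ℝ}

lemma radialKernel_mul_pow_eq (hm : 1 ≤ m) (hs : s ≠ 0) (hr : r ≠ 0) :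
    radialKernel m r s * s ^ m = s * r ^ m - s ^ (2 * m + 1) / r ^ m := by
  obtain ⟨k, rfl⟩ := Nat.exists_eq_add_of_le' hm
  simp only [radialKernel, Nat.add_sub_cancel]
  field_simp
  ring

lemma abs_radialKernel_mul_pow_le (hm : 1 ≤ m) (hs : 0 < s) (hsr : s ≤ r) :
    |radialKernel m r s * s ^ m| ≤ s * r ^ m := by
  have hr : 0 < r := hs.trans_le hsr
  rw [radialKernel_mul_pow_eq hm hs.ne' hr.ne']
  have hsub : s ^ (2 * m + 1) / r ^ m ≤ s * r ^ m := by
    rw [div_le_iff₀ (by positivity)]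
    calc s ^ (2 * m + 1) = s * s ^ (2 * m) := by ring
      _ ≤ s * r ^ (2 * m) := by gcongr
      _ = s * r ^ m * r ^ m := by ring
  rw [abs_of_nonneg (sub_nonneg.mpr hsub)]
  linarith [show 0 ≤ s ^ (2 * m + 1) / r ^ m by positivity]

lemma abs_radialKernel_mul_le (hm : 1 ≤ m) (hs : 0 < s) (hsr : s ≤ r) {x M : ℝ}
    (hx : |x / s ^ m| ≤ M) :
    |radialKernel m r s * x| ≤ M * r ^ m * s := by
  have hx_eq : x = x / s ^ m * s ^ m := by field_simp
  calc |radialKernel m r s * x|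
      = |radialKernel m r s * s ^ m| * |x / s ^ m| := by
        rw [← abs_mul]; congr 1; nth_rw 1 [hx_eq]; ring
    _ ≤ s * r ^ m * M :=
        mul_le_mul (abs_radialKernel_mul_pow_le hm hs hsr) hx (abs_nonneg _)
          (by have := hs.trans_le hsr; positivity)
    _ = M * r ^ m * s := by ring

end RadialKernel

lemma abs_integral_le_of_abs_le_linear {φ : ℝ → ℝ} {A r : ℝ} (hr : 0 ≤ r)
    (hφ : ∀ s ∈ Ioc 0 r, |φ s| ≤ A * s) :
    |∫ s in (0 : ℝ)..r, φ s| ≤ A * (r ^ 2 / 2) := by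
  have hbound : ‖∫ s in (0 : ℝ)..r, φ s‖ ≤ ∫ s in (0 : ℝ)..r, A * s :=
    norm_integral_le_of_norm_le hr (.of_forall fun s hs ↦ hφ s hs)
      ((continuous_const_mul A).intervalIntegrable 0 r)
  rwa [integral_const_mul, integral_id, zero_pow two_ne_zero, sub_zero] at hbound

theorem tcgl_local_growth_estimate_general (m : ℕ) (hm : 1 ≤ m) (β₂ α β' C M Mhat δ : ℝ)
    (hM : 0 ≤ M)
    (f g : ℝ → ℝ)
    (hint : ∀ r ∈ Icc (0:ℝ) δ,
      g r = C * r ^ m + (1 / (2 * (m : ℝ))) *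
        ∫ s in (0:ℝ)..r, (r ^ m / s ^ (m - 1) - s ^ (m + 1) / r ^ m) *
          g s * (β₂ * (g s) ^ 2 - α + β' * (f s) ^ 2))
    (hgM : ∀ s ∈ Ioc (0:ℝ) δ, |g s / s ^ m| ≤ M)
    (hMhat' : ∀ s ∈ Icc (0:ℝ) δ, |β₂ * (g s) ^ 2 - α + β' * (f s) ^ 2| ≤ Mhat) :
    ∀ r ∈ Icc (0:ℝ) δ, |g r - C * r ^ m| ≤ M * Mhat / (4 * (m : ℝ)) * r ^ (m + 2) := by
  intro r hr
  have hm0 : (0 : ℝ) < m := by exact_mod_cast hm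
  have hintegral := abs_integral_le_of_abs_le_linear (A := M * Mhat * r ^ m) hr.1
    fun s ⟨hs0, hsr⟩ ↦ by
      have hsδ : s ≤ δ := hsr.trans hr.2
      have hr0 : 0 < r := hs0.trans_le hsr
      rw [abs_mul]
      calc _ ≤ M * r ^ m * s * Mhat :=
            mul_le_mul (abs_radialKernel_mul_le hm hs0 hsr (hgM s ⟨hs0, hsδ⟩))
              (hMhat' s ⟨hs0.le, hsδ⟩) (abs_nonneg _) (by positivity)
        _ = M * Mhat * r ^ m * s := by ring
  rw [hint r hr, add_sub_cancel_left, abs_mul, abs_of_pos (by positivity)]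
  calc _ ≤ 1 / (2 * (m : ℝ)) * (M * Mhat * r ^ m * (r ^ 2 / 2)) := by
        gcongr; exact hintegral
    _ = M * Mhat / (4 * (m : ℝ)) * r ^ (m + 2) := by field_simp; ring

/-- Local growth estimate (Step 6 of Lemma 4.1): |g(r) - C rᵐ| ≤ (M M̂)/(4m) r^{m+2}. -/
theorem tcgl_local_growth_estimate (m : ℕ) (hm : 1 ≤ m) (β₂ α β' C M Mhat δ : ℝ)
    (hδ : 0 < δ) (hM : 0 ≤ M) (hMhat : 0 ≤ Mhat)
    (f g : ℝ → ℝ) (hg_cont : ContinuousOn g (Icc 0 δ))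
    (hint : ∀ r ∈ Icc (0:ℝ) δ,
      g r = C * r ^ m + (1 / (2 * (m : ℝ))) *
        ∫ s in (0:ℝ)..r, (r ^ m / s ^ (m - 1) - s ^ (m + 1) / r ^ m) *
          g s * (β₂ * (g s) ^ 2 - α + β' * (f s) ^ 2))
    (hgM : ∀ s ∈ Ioc (0:ℝ) δ, |g s / s ^ m| ≤ M)
    (hMhat' : ∀ s ∈ Icc (0:ℝ) δ, |β₂ * (g s) ^ 2 - α + β' * (f s) ^ 2| ≤ Mhat) :
    ∀ r ∈ Icc (0:ℝ) δ, |g r - C * r ^ m| ≤ M * Mhat / (4 * (m : ℝ)) * r ^ (m + 2) :=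
  tcgl_local_growth_estimate_general m hm β₂ α β' C M Mhat δ hM f g hint hgM hMhat'
end

section
/- Let (f, g) be a C² solution pair on (0,∞) of f'' + f'/r - (n²/r²)f = ∂V/∂f·(1/2) and g'' + g'/r - (m²/r²)g = ∂V/∂g·(1/2) (the radial two-component Ginzburg–Landau equations), with f(∞) = A, g(∞) = B, f(r) = A + O(r⁻²), g(r) = B + O(r⁻²), r²f'(r)² → 0 and r²g'(r)² → 0 as r → ∞, and f(0)·n = 0, g(0)·m = 0, rf'(r)² → 0, rg'(r)² → 0 as r → 0. Then the Pohozaev-type identity holds: ∫₀^∞ r (V(f(r),g(r)) - V(A,B)) dr = (n²A² + m²B²)/2, where V(f,g) = (β₁/2)(f²-1)² + (β₂/2)g⁴ + β'f²g² - αg². -/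
/-!
With `W = V(f, g) - V(A, B)` and `E_k[φ] = r² φ'² - k φ²`, the radial equation
`φ'' + φ'/r - k φ/r² = ψ` gives `E_k[φ]' = 2 r² φ' ψ`, so the Pohozaev function
`P = (r² W - E_{n²}[f] - E_{m²}[g]) / 2` satisfies `P' = r W` and the integral is
`P(∞) - P(0⁺)`. Everything rests on `(r φ')' = k φ / r + r ψ`. At infinity, `r f' → 0` forces
the right-hand sides of the equations to vanish at `(A, B)` (otherwise `r f'` would grow like
`r²`), so `(A, B)` is a critical point of `V`; then `W = O(r⁻⁴)` and `P → (n²A² + m²B²)/2`.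
Near the origin, `r f'² → 0` gives `f' = O(r^(-1/2))`, so `L = f(0⁺)` exists, and `n² L ≠ 0`
would make `r f'` grow like `log r`; hence `n L = 0` and `P → 0`.
-/

open Set Filter MeasureTheory Topology Asymptotics

lemma tendsto_zero_of_tendsto_sq {l : Filter ℝ} {u : ℝ → ℝ}
    (h : Tendsto (fun r => u r ^ 2) l (𝓝 0)) : Tendsto u l (𝓝 0) := by
  rw [tendsto_zero_iff_abs_tendsto_zero]
  simpa [Function.comp_def, Real.sqrt_sq_eq_abs] using (Real.continuous_sqrt.tendsto 0).comp h

lemma mul_le_abs_sub_of_le_abs_deriv {u u' : ℝ → ℝ} {r ε : ℝ} (hr : 0 < r)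
    (hu : ∀ ξ ∈ Icc r (2 * r), HasDerivAt u (u' ξ) ξ) (hε : ∀ ξ ∈ Ioo r (2 * r), ε ≤ |u' ξ|) :
    r * ε ≤ |u (2 * r) - u r| := by
  obtain ⟨ξ, hξ, hslope⟩ := exists_hasDerivAt_eq_slope u u' (by linarith : r < 2 * r)
    (fun x hx => (hu x hx).continuousAt.continuousWithinAt)
    (fun x hx => hu x (Ioo_subset_Icc_self hx))
  have hdiff : u (2 * r) - u r = r * u' ξ := by
    rw [hslope]; field_simp; ring
  rw [hdiff, abs_mul, abs_of_pos hr]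
  exact mul_le_mul_of_nonneg_left (hε ξ hξ) hr.le

/-- By the mean value theorem on `[r, 2r]`, `c ≠ 0` would give `|u (2r) - u r| ≳ |c| r²`. -/
lemma eq_zero_of_tendsto_deriv_div_self_atTop {u u' : ℝ → ℝ} {c : ℝ}
    (hu : ∀ᶠ r in atTop, HasDerivAt u (u' r) r) (hu0 : Tendsto u atTop (𝓝 0))
    (hc : Tendsto (fun r => u' r / r) atTop (𝓝 c)) : c = 0 := by
  by_contra hc0
  have hpos : 0 < |c| := abs_pos.2 hc0
  have hgrowth : ∀ᶠ r in atTop, ∀ ξ, r ≤ ξ →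
      0 < ξ ∧ HasDerivAt u (u' ξ) ξ ∧ |c| / 2 < |u' ξ / ξ| :=
    eventually_forall_ge_atTop.2
      ((eventually_gt_atTop 0).and (hu.and (hc.abs.eventually_const_lt (half_lt_self hpos))))
  have hsmall : ∀ᶠ r in atTop, |u (2 * r) - u r| < 1 := by
    have h := (hu0.comp (tendsto_id.const_mul_atTop two_pos)).sub hu0
    rw [sub_zero] at h
    exact (h.abs.eventually_lt_const (by norm_num : |(0:ℝ)| < 1))
  obtain ⟨r, hr, hr_small, hr1, hrc⟩ := (hgrowth.and (hsmall.and ((eventually_ge_atTop 1).and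
    (eventually_ge_atTop (2 / |c|))))).exists
  have hr0 : 0 < r := (hr r le_rfl).1
  have hbound := mul_le_abs_sub_of_le_abs_deriv (ε := r * (|c| / 2)) hr0
    (fun ξ hξ => (hr ξ hξ.1).2.1) fun ξ hξ => by
      obtain ⟨hξ0, -, hξc⟩ := hr ξ hξ.1.le
      rw [abs_div, abs_of_pos hξ0, lt_div_iff₀ hξ0] at hξc
      nlinarith [hξ.1]
  have : 2 ≤ r * |c| := by rwa [div_le_iff₀ hpos] at hrc
  nlinarith

/-- By the mean value theorem on `[r, 2r]`, `d ≠ 0` would give `|u (2r) - u r| ≳ |d|`. -/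
lemma eq_zero_of_tendsto_self_mul_deriv_nhdsGT {u u' : ℝ → ℝ} {d : ℝ}
    (hu : ∀ᶠ r in 𝓝[>] 0, HasDerivAt u (u' r) r) (hu0 : Tendsto u (𝓝[>] 0) (𝓝 0))
    (hd : Tendsto (fun r => r * u' r) (𝓝[>] 0) (𝓝 d)) : d = 0 := by
  by_contra hd0
  have hpos : 0 < |d| := abs_pos.2 hd0
  obtain ⟨δ, hδ, hnear⟩ := mem_nhdsGT_iff_exists_Ioo_subset.1 (hu.and
    ((hd.abs.eventually_const_lt (half_lt_self hpos)).and
      (hu0.abs.eventually_lt_const (show |(0:ℝ)| < |d| / 8 by rw [abs_zero]; positivity))))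
  have hδ0 : (0:ℝ) < δ := hδ
  obtain ⟨r, hr0, hrδ⟩ : ∃ r, 0 < r ∧ 2 * r < δ := ⟨δ / 4, by positivity, by linarith⟩
  have hsub : Icc r (2 * r) ⊆ Ioo 0 δ := fun ξ hξ => ⟨hr0.trans_le hξ.1, by linarith [hξ.2]⟩
  have hbound := mul_le_abs_sub_of_le_abs_deriv (ε := |d| / (4 * r)) hr0
    (fun ξ hξ => (hnear (hsub hξ)).1) fun ξ hξ => by
      obtain ⟨-, hξd, -⟩ := hnear (hsub (Ioo_subset_Icc_self hξ))
      have hξ0 : 0 < ξ := hr0.trans hξ.1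
      rw [abs_mul, abs_of_pos hξ0] at hξd
      rw [div_le_iff₀ (by positivity)]
      nlinarith [hξ.2, abs_nonneg (u' ξ)]
  have h1 := (hnear (hsub ⟨le_rfl, by linarith⟩)).2.2
  have h2 := (hnear (hsub ⟨by linarith, le_rfl⟩)).2.2
  rw [show r * (|d| / (4 * r)) = |d| / 4 by field_simp] at hbound
  linarith [abs_sub (u (2 * r)) (u r), abs_sub_le (u (2 * r)) 0 (u r)]

/-- `t ↦ φ (t ^ 2)` has bounded derivative, so it is Lipschitz and extends continuously to `0`. -/
lemma exists_tendsto_nhdsGT_of_mul_sq_deriv_le {φ φ' : ℝ → ℝ} {C : ℝ}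
    (hφ : ∀ᶠ r in 𝓝[>] 0, HasDerivAt φ (φ' r) r) (hC : ∀ᶠ r in 𝓝[>] 0, r * φ' r ^ 2 ≤ C) :
    ∃ L, Tendsto φ (𝓝[>] 0) (𝓝 L) := by
  obtain ⟨δ, hδ, hnear⟩ := mem_nhdsGT_iff_exists_Ioo_subset.1 (hφ.and hC)
  set s := Ioo 0 (√δ)
  have hs : ∀ t ∈ s, t ^ 2 ∈ Ioo 0 δ := fun t ht =>
    ⟨by positivity [ht.1], (Real.lt_sqrt ht.1.le).1 ht.2⟩
  have hderiv : ∀ t ∈ s, HasDerivWithinAt (fun t => φ (t ^ 2)) (φ' (t ^ 2) * (2 * t)) s t := by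
    intro t ht
    have h := (hnear (hs t ht)).1.comp (h := fun t : ℝ => t ^ 2) t (hasDerivAt_pow 2 t)
    simp only [Nat.cast_ofNat, Nat.add_one_sub_one, pow_one] at h
    exact h.hasDerivWithinAt
  have hbound : ∀ t ∈ s, ‖φ' (t ^ 2) * (2 * t)‖ ≤ 2 * √C := by
    intro t ht
    have h := Real.abs_le_sqrt (x := t * φ' (t ^ 2)) (y := C) <| by
      linear_combination (hnear (hs t ht)).2
    rw [Real.norm_eq_abs, show φ' (t ^ 2) * (2 * t) = 2 * (t * φ' (t ^ 2)) by ring, abs_mul,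
      abs_two]
    linarith
  have hlip : LipschitzOnWith (2 * √C).toNNReal (fun t => φ (t ^ 2)) s :=
    LipschitzOnWith.of_dist_le' fun x hx y hy => by
      simpa [dist_eq_norm] using
        Convex.norm_image_sub_le_of_norm_hasDerivWithin_le hderiv hbound (convex_Ioo _ _) hy hx
  obtain ⟨g, hg, hfg⟩ := hlip.extend_real
  refine ⟨g 0, ?_⟩
  have hsq : Tendsto (fun t => φ (t ^ 2)) (𝓝[>] 0) (𝓝 (g 0)) := by
    refine (hg.continuous.tendsto 0 |>.mono_left nhdsWithin_le_nhds).congr' ?_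
    filter_upwards [Ioo_mem_nhdsGT (Real.sqrt_pos.2 hδ)] with t ht using (hfg ht).symm
  have hsqrt : Tendsto Real.sqrt (𝓝[>] 0) (𝓝[>] 0) := by
    refine tendsto_nhdsWithin_iff.2 ⟨?_, ?_⟩
    · simpa using (Real.continuous_sqrt.tendsto 0).mono_left nhdsWithin_le_nhds
    · filter_upwards [self_mem_nhdsWithin] with r hr using Real.sqrt_pos.2 hr
  refine (hsq.comp hsqrt).congr' ?_
  filter_upwards [self_mem_nhdsWithin] with r hr
  simp [Real.sq_sqrt (le_of_lt hr)]

lemma integral_Ioi_of_hasDerivAt_of_tendsto_nhdsGT {F F' : ℝ → ℝ} {c a b : ℝ}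
    (hderiv : ∀ x ∈ Ioi c, HasDerivAt F (F' x) x) (hint : IntegrableOn F' (Ioi c))
    (hc : Tendsto F (𝓝[>] c) (𝓝 a)) (htop : Tendsto F atTop (𝓝 b)) :
    ∫ x in Ioi c, F' x = b - a := by
  have hcont : ContinuousWithinAt (Function.update F c a) (Ici c) c := by
    rwa [continuousWithinAt_update_same, Ici_sdiff_left]
  have h := integral_Ioi_of_hasDerivAt_of_tendsto hcont
    (fun x hx => (hderiv x hx).congr_of_eventuallyEq <| by
      filter_upwards [lt_mem_nhds hx] with y hy using Function.update_of_ne hy.ne' ..) hint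
    (htop.congr' <| by
      filter_upwards [eventually_gt_atTop c] with y hy using (Function.update_of_ne hy.ne' ..).symm)
  rwa [Function.update_self] at h

lemma integrableOn_Ioi_of_tendsto_nhdsGT_of_isBigO_rpow {F : ℝ → ℝ} {c a s : ℝ}
    (hF : ContinuousOn F (Ioi c)) (hc : Tendsto F (𝓝[>] c) (𝓝 a))
    (htop : F =O[atTop] fun r => r ^ s) (hs : s < -1) : IntegrableOn F (Ioi c) := by
  have hmeas : AEStronglyMeasurable F (volume.restrict (Ioi c)) :=
    hF.aestronglyMeasurable measurableSet_Ioi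
  refine integrableOn_Ioi_iff_integrableAtFilter_atTop_nhdsWithin.2 ⟨?_, ?_, ?_⟩
  · exact htop.integrableAtFilter ⟨Ioi c, Ioi_mem_atTop c, hmeas⟩
      (integrableAtFilter_rpow_atTop_iff.2 hs)
  · exact hc.integrableAtFilter ⟨Ioi c, self_mem_nhdsWithin, hmeas⟩
      (volume.finiteAt_nhdsWithin c _)
  · exact hF.locallyIntegrableOn measurableSet_Ioi

lemma isBigO_self_mul_rpow_of_isBigO {W : ℝ → ℝ} (h : W =O[atTop] fun r => (r⁻¹ ^ 2) ^ 2) :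
    (fun r => r * W r) =O[atTop] fun r => r ^ (-3 : ℝ) := by
  refine ((isBigO_refl (fun r : ℝ => r) atTop).mul h).trans_eventuallyEq ?_
  filter_upwards [eventually_gt_atTop 0] with r hr
  rw [Real.rpow_neg hr.le, show (3:ℝ) = (3:ℕ) by norm_num, Real.rpow_natCast]
  field_simp

lemma tendsto_sq_mul_of_isBigO {W : ℝ → ℝ} (h : W =O[atTop] fun r => (r⁻¹ ^ 2) ^ 2) :
    Tendsto (fun r => r ^ 2 * W r) atTop (𝓝 0) := by
  refine ((isBigO_refl (fun r : ℝ => r ^ 2) atTop).mul h).trans_tendsto ?_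
  have h0 : Tendsto (fun r : ℝ => r⁻¹ ^ 2) atTop (𝓝 0) := by
    simpa using (tendsto_inv_atTop_zero (𝕜 := ℝ)).pow 2
  refine h0.congr' ?_
  filter_upwards [eventually_gt_atTop 0] with r hr
  field_simp

structure IsRadialSolution (k : ℝ) (φ ψ : ℝ → ℝ) : Prop where
  hasDerivAt : ∀ r ∈ Ioi (0:ℝ), HasDerivAt φ (deriv φ r) r
  hasDerivAt_deriv : ∀ r ∈ Ioi (0:ℝ), HasDerivAt (deriv φ) (deriv (deriv φ) r) r
  ode : ∀ r ∈ Ioi (0:ℝ), deriv (deriv φ) r + deriv φ r / r - k / r ^ 2 * φ r = ψ r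

noncomputable def radialEnergy (k : ℝ) (φ : ℝ → ℝ) (r : ℝ) : ℝ :=
  r ^ 2 * deriv φ r ^ 2 - k * φ r ^ 2

lemma tendsto_radialEnergy {k : ℝ} {φ : ℝ → ℝ} {l : Filter ℝ} {L : ℝ} (hφ : Tendsto φ l (𝓝 L))
    (hφ' : Tendsto (fun r => r ^ 2 * deriv φ r ^ 2) l (𝓝 0)) :
    Tendsto (radialEnergy k φ) l (𝓝 (-(k * L ^ 2))) := by
  have h := hφ'.sub ((hφ.pow 2).const_mul k)
  rwa [zero_sub] at h

namespace IsRadialSolution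

variable {k : ℝ} {φ ψ : ℝ → ℝ}

lemma of_contDiffOn (hφ : ContDiffOn ℝ 2 φ (Ioi 0))
    (heq : ∀ r ∈ Ioi (0:ℝ), deriv (deriv φ) r + deriv φ r / r - k / r ^ 2 * φ r = ψ r) :
    IsRadialSolution k φ ψ where
  hasDerivAt r hr :=
    ((hφ.differentiableOn (by norm_num)).differentiableAt (isOpen_Ioi.mem_nhds hr)).hasDerivAt
  hasDerivAt_deriv r hr :=
    (((hφ.deriv_of_isOpen (m := 1) isOpen_Ioi (by norm_num)).differentiableOn
      one_ne_zero).differentiableAt (isOpen_Ioi.mem_nhds hr)).hasDerivAt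
  ode := heq

lemma hasDerivAt_mul_deriv (h : IsRadialSolution k φ ψ) {r : ℝ} (hr : 0 < r) :
    HasDerivAt (fun s => s * deriv φ s) (k * φ r / r + r * ψ r) r := by
  refine ((hasDerivAt_id r).mul (h.hasDerivAt_deriv r hr)).congr_deriv ?_
  rw [← h.ode r hr, id]
  field_simp
  ring

lemma hasDerivAt_radialEnergy (h : IsRadialSolution k φ ψ) {r : ℝ} (hr : 0 < r) :
    HasDerivAt (radialEnergy k φ) (2 * r ^ 2 * deriv φ r * ψ r) r := by
  have hE : radialEnergy k φ = fun s => (s * deriv φ s) ^ 2 - k * φ s ^ 2 := by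
    ext s; simp only [radialEnergy]; ring
  rw [hE]
  refine (((h.hasDerivAt_mul_deriv hr).fun_pow 2).fun_sub
    (((h.hasDerivAt r hr).fun_pow 2).const_mul k)).congr_deriv ?_
  field_simp
  ring

lemma forcing_limit_atTop_eq_zero (h : IsRadialSolution k φ ψ) {A c : ℝ}
    (hφ : Tendsto φ atTop (𝓝 A)) (hψ : Tendsto ψ atTop (𝓝 c))
    (hφ' : Tendsto (fun r => r ^ 2 * deriv φ r ^ 2) atTop (𝓝 0)) : c = 0 := by
  refine eq_zero_of_tendsto_deriv_div_self_atTop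
    ((eventually_gt_atTop 0).mono fun r hr => h.hasDerivAt_mul_deriv hr)
    (tendsto_zero_of_tendsto_sq (hφ'.congr fun r => by ring)) ?_
  have hdecay : Tendsto (fun r => k * φ r / r ^ 2) atTop (𝓝 0) :=
    (hφ.const_mul k).div_atTop (tendsto_pow_atTop two_ne_zero)
  refine (by simpa using hdecay.add hψ : Tendsto _ _ (𝓝 c)).congr' ?_
  filter_upwards [eventually_gt_atTop 0] with r hr
  field_simp

lemma mul_limit_nhdsGT_eq_zero (h : IsRadialSolution k φ ψ) {L w : ℝ}
    (hφ : Tendsto φ (𝓝[>] 0) (𝓝 L)) (hψ : Tendsto ψ (𝓝[>] 0) (𝓝 w))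
    (hφ' : Tendsto (fun r => r * deriv φ r ^ 2) (𝓝[>] 0) (𝓝 0)) : k * L = 0 := by
  have hid : Tendsto (fun r : ℝ => r) (𝓝[>] 0) (𝓝 0) := tendsto_id.mono_left nhdsWithin_le_nhds
  have hu : Tendsto (fun r => (r * deriv φ r) ^ 2) (𝓝[>] 0) (𝓝 0) := by
    have h0 := hid.mul hφ'
    rw [zero_mul] at h0
    exact h0.congr fun r => by ring
  have hlim : Tendsto (fun r => k * φ r + r ^ 2 * ψ r) (𝓝[>] 0) (𝓝 (k * L)) := by
    have h0 := (hφ.const_mul k).add ((hid.pow 2).mul hψ)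
    rwa [zero_pow two_ne_zero, zero_mul, add_zero] at h0
  refine eq_zero_of_tendsto_self_mul_deriv_nhdsGT
    (eventually_nhdsWithin_of_forall fun r hr => h.hasDerivAt_mul_deriv hr)
    (tendsto_zero_of_tendsto_sq hu) (hlim.congr' ?_)
  filter_upwards [self_mem_nhdsWithin] with r (hr : 0 < r)
  field_simp

lemma continuousOn (h : IsRadialSolution k φ ψ) : ContinuousOn φ (Ioi 0) :=
  fun r hr => (h.hasDerivAt r hr).continuousAt.continuousWithinAt

lemma exists_tendsto_nhdsGT (h : IsRadialSolution k φ ψ)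
    (hφ' : Tendsto (fun r => r * deriv φ r ^ 2) (𝓝[>] 0) (𝓝 0)) :
    ∃ L, Tendsto φ (𝓝[>] 0) (𝓝 L) :=
  exists_tendsto_nhdsGT_of_mul_sq_deriv_le
    (eventually_nhdsWithin_of_forall h.hasDerivAt) (hφ'.eventually_le_const zero_lt_one)

end IsRadialSolution

lemma tendsto_comp₂_of_continuous {F : ℝ → ℝ → ℝ} (hF : Continuous fun p : ℝ × ℝ => F p.1 p.2)
    {l : Filter ℝ} {f g : ℝ → ℝ} {x y : ℝ} (hf : Tendsto f l (𝓝 x)) (hg : Tendsto g l (𝓝 y)) :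
    Tendsto (fun r => F (f r) (g r)) l (𝓝 (F x y)) :=
  (hF.tendsto (x, y)).comp (hf.prodMk_nhds hg)

section GinzburgLandau

variable (β₁ β₂ β' α : ℝ)

noncomputable def glPotential (x y : ℝ) : ℝ :=
  β₁ / 2 * (x ^ 2 - 1) ^ 2 + β₂ / 2 * y ^ 4 + β' * x ^ 2 * y ^ 2 - α * y ^ 2

/-- `glForceX` and `glForceY` are half the partial derivatives of `glPotential`. -/
def glForceX (x y : ℝ) : ℝ := x * (β₁ * (x ^ 2 - 1) + β' * y ^ 2)

def glForceY (x y : ℝ) : ℝ := y * (β₂ * y ^ 2 - α + β' * x ^ 2)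

lemma continuous_glPotential : Continuous fun p : ℝ × ℝ => glPotential β₁ β₂ β' α p.1 p.2 := by
  unfold glPotential; fun_prop

lemma continuous_glForceX : Continuous fun p : ℝ × ℝ => glForceX β₁ β' p.1 p.2 := by
  unfold glForceX; fun_prop

lemma continuous_glForceY : Continuous fun p : ℝ × ℝ => glForceY β₂ β' α p.1 p.2 := by
  unfold glForceY; fun_prop

variable {β₁ β₂ β' α}

lemma hasDerivAt_glPotential_comp {f g : ℝ → ℝ} {f' g' r : ℝ} (hf : HasDerivAt f f' r)
    (hg : HasDerivAt g g' r) :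
    HasDerivAt (fun s => glPotential β₁ β₂ β' α (f s) (g s))
      (2 * (glForceX β₁ β' (f r) (g r) * f' + glForceY β₂ β' α (f r) (g r) * g')) r := by
  unfold glPotential glForceX glForceY
  refine (((((((hf.fun_pow 2).sub_const 1).fun_pow 2).const_mul (β₁ / 2)).fun_add
    ((hg.fun_pow 4).const_mul (β₂ / 2))).fun_add
    (((hf.fun_pow 2).const_mul β').fun_mul (hg.fun_pow 2))).fun_sub
    ((hg.fun_pow 2).const_mul α)).congr_deriv ?_
  push_cast
  ring

lemma glPotential_sub_eq {A B : ℝ} (hA : glForceX β₁ β' A B = 0)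
    (hB : glForceY β₂ β' α A B = 0) (x y : ℝ) :
    glPotential β₁ β₂ β' α x y - glPotential β₁ β₂ β' α A B
      = (x - A) ^ 2 * (β₁ * (A ^ 2 - 1) + β' * B ^ 2 + β₁ / 2 * (x + A) ^ 2)
        + (y - B) ^ 2 * (β₂ * B ^ 2 - α + β' * A ^ 2 + β₂ / 2 * (y + B) ^ 2)
        + (x - A) * (y - B) * (β' * (x + A) * (y + B)) := by
  unfold glForceX at hA
  unfold glForceY at hB
  unfold glPotential
  linear_combination 2 * (x - A) * hA + 2 * (y - B) * hB

lemma glPotential_sub_isBigO {l : Filter ℝ} {f g e : ℝ → ℝ} {A B : ℝ}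
    (hA : glForceX β₁ β' A B = 0) (hB : glForceY β₂ β' α A B = 0)
    (hf : Tendsto f l (𝓝 A)) (hg : Tendsto g l (𝓝 B))
    (hfe : (fun r => f r - A) =O[l] e) (hge : (fun r => g r - B) =O[l] e) :
    (fun r => glPotential β₁ β₂ β' α (f r) (g r) - glPotential β₁ β₂ β' α A B)
      =O[l] fun r => e r ^ 2 := by
  simp_rw [glPotential_sub_eq hA hB]
  have h₁ : (fun r => β₁ * (A ^ 2 - 1) + β' * B ^ 2 + β₁ / 2 * (f r + A) ^ 2) =O[l]
      fun _ => (1:ℝ) :=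
    ((((hf.add_const A).pow 2).const_mul _).const_add _).isBigO_one ℝ
  have h₂ : (fun r => β₂ * B ^ 2 - α + β' * A ^ 2 + β₂ / 2 * (g r + B) ^ 2) =O[l]
      fun _ => (1:ℝ) :=
    ((((hg.add_const B).pow 2).const_mul _).const_add _).isBigO_one ℝ
  have h₃ : (fun r => β' * (f r + A) * (g r + B)) =O[l] fun _ => (1:ℝ) :=
    (((hf.add_const A).const_mul β').mul (hg.add_const B)).isBigO_one ℝ
  have t₁ : (fun r => (f r - A) ^ 2 * (β₁ * (A ^ 2 - 1) + β' * B ^ 2 + β₁ / 2 * (f r + A) ^ 2))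
      =O[l] fun r => e r ^ 2 := by simpa using (hfe.pow 2).mul h₁
  have t₂ : (fun r => (g r - B) ^ 2 * (β₂ * B ^ 2 - α + β' * A ^ 2 + β₂ / 2 * (g r + B) ^ 2))
      =O[l] fun r => e r ^ 2 := by simpa using (hge.pow 2).mul h₂
  have t₃ : (fun r => (f r - A) * (g r - B) * (β' * (f r + A) * (g r + B)))
      =O[l] fun r => e r ^ 2 := by simpa [sq] using (hfe.mul hge).mul h₃
  exact (t₁.add t₂).add t₃

end GinzburgLandau

noncomputable def pohozaev (V : ℝ → ℝ → ℝ) (V₀ k₁ k₂ : ℝ) (f g : ℝ → ℝ) (r : ℝ) : ℝ :=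
  (r ^ 2 * (V (f r) (g r) - V₀) - radialEnergy k₁ f r - radialEnergy k₂ g r) / 2

lemma hasDerivAt_pohozaev {β₁ β₂ β' α k₁ k₂ V₀ r : ℝ} {f g : ℝ → ℝ}
    (hf : IsRadialSolution k₁ f fun r => glForceX β₁ β' (f r) (g r))
    (hg : IsRadialSolution k₂ g fun r => glForceY β₂ β' α (f r) (g r)) (hr : 0 < r) :
    HasDerivAt (pohozaev (glPotential β₁ β₂ β' α) V₀ k₁ k₂ f g)
      (r * (glPotential β₁ β₂ β' α (f r) (g r) - V₀)) r := by
  refine (((((hasDerivAt_pow 2 r).fun_mul ((hasDerivAt_glPotential_comp (hf.hasDerivAt r hr)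
    (hg.hasDerivAt r hr)).sub_const V₀)).fun_sub (hf.hasDerivAt_radialEnergy hr)).fun_sub
    (hg.hasDerivAt_radialEnergy hr)).div_const 2).congr_deriv ?_
  push_cast
  ring

lemma tendsto_pohozaev {V : ℝ → ℝ → ℝ} {V₀ k₁ k₂ a b : ℝ} {f g : ℝ → ℝ} {l : Filter ℝ}
    (hV : Tendsto (fun r => r ^ 2 * (V (f r) (g r) - V₀)) l (𝓝 0))
    (hf : Tendsto f l (𝓝 a)) (hg : Tendsto g l (𝓝 b))
    (hf' : Tendsto (fun r => r ^ 2 * deriv f r ^ 2) l (𝓝 0))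
    (hg' : Tendsto (fun r => r ^ 2 * deriv g r ^ 2) l (𝓝 0)) :
    Tendsto (pohozaev V V₀ k₁ k₂ f g) l (𝓝 ((k₁ * a ^ 2 + k₂ * b ^ 2) / 2)) := by
  rw [show (k₁ * a ^ 2 + k₂ * b ^ 2) / 2 = (0 - -(k₁ * a ^ 2) - -(k₂ * b ^ 2)) / 2 by ring]
  exact ((hV.sub (tendsto_radialEnergy hf hf')).sub (tendsto_radialEnergy hg hg')).div_const 2

theorem tcgl_quantization_general (n m : ℕ) (β₁ β₂ β' α A B : ℝ)
    (V : ℝ → ℝ → ℝ)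
    (hV : ∀ x y, V x y = β₁ / 2 * (x ^ 2 - 1) ^ 2 + β₂ / 2 * y ^ 4
        + β' * x ^ 2 * y ^ 2 - α * y ^ 2)
    (f g : ℝ → ℝ)
    (hf_smooth : ContDiffOn ℝ 2 f (Ioi 0)) (hg_smooth : ContDiffOn ℝ 2 g (Ioi 0))
    (hf_ode : ∀ r ∈ Ioi (0:ℝ),
      deriv (deriv f) r + deriv f r / r - ((n : ℝ) ^ 2 / r ^ 2) * f r
        = f r * (β₁ * ((f r) ^ 2 - 1) + β' * (g r) ^ 2))
    (hg_ode : ∀ r ∈ Ioi (0:ℝ),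
      deriv (deriv g) r + deriv g r / r - ((m : ℝ) ^ 2 / r ^ 2) * g r
        = g r * (β₂ * (g r) ^ 2 - α + β' * (f r) ^ 2))
    (hf_lim : Tendsto f atTop (nhds A)) (hg_lim : Tendsto g atTop (nhds B))
    (hf_asym : (fun r => f r - A) =O[atTop] fun r => r⁻¹ ^ 2)
    (hg_asym : (fun r => g r - B) =O[atTop] fun r => r⁻¹ ^ 2)
    (hf'_top : Tendsto (fun r => r ^ 2 * (deriv f r) ^ 2) atTop (nhds 0))
    (hg'_top : Tendsto (fun r => r ^ 2 * (deriv g r) ^ 2) atTop (nhds 0))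
    (hf'_0 : Tendsto (fun r => r * (deriv f r) ^ 2) (nhdsWithin 0 (Ioi 0)) (nhds 0))
    (hg'_0 : Tendsto (fun r => r * (deriv g r) ^ 2) (nhdsWithin 0 (Ioi 0)) (nhds 0)) :
    ∫ r in Ioi (0:ℝ), r * (V (f r) (g r) - V A B)
      = ((n : ℝ) ^ 2 * A ^ 2 + (m : ℝ) ^ 2 * B ^ 2) / 2 := by
  obtain rfl : V = glPotential β₁ β₂ β' α := funext₂ hV
  have hf : IsRadialSolution ((n : ℝ) ^ 2) f fun r => glForceX β₁ β' (f r) (g r) :=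
    .of_contDiffOn hf_smooth hf_ode
  have hg : IsRadialSolution ((m : ℝ) ^ 2) g fun r => glForceY β₂ β' α (f r) (g r) :=
    .of_contDiffOn hg_smooth hg_ode
  obtain ⟨L, hL⟩ := hf.exists_tendsto_nhdsGT hf'_0
  obtain ⟨M, hM⟩ := hg.exists_tendsto_nhdsGT hg'_0
  have hA := hf.forcing_limit_atTop_eq_zero hf_lim
    (tendsto_comp₂_of_continuous (continuous_glForceX β₁ β') hf_lim hg_lim) hf'_top
  have hB := hg.forcing_limit_atTop_eq_zero hg_lim
    (tendsto_comp₂_of_continuous (continuous_glForceY β₂ β' α) hf_lim hg_lim) hg'_top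
  have hL0 := hf.mul_limit_nhdsGT_eq_zero hL
    (tendsto_comp₂_of_continuous (continuous_glForceX β₁ β') hL hM) hf'_0
  have hM0 := hg.mul_limit_nhdsGT_eq_zero hM
    (tendsto_comp₂_of_continuous (continuous_glForceY β₂ β' α) hL hM) hg'_0
  have hW := glPotential_sub_isBigO hA hB hf_lim hg_lim hf_asym hg_asym
  have hid : Tendsto (fun r : ℝ => r) (𝓝[>] 0) (𝓝 0) := tendsto_id.mono_left nhdsWithin_le_nhds
  have hW0 := (tendsto_comp₂_of_continuous (continuous_glPotential β₁ β₂ β' α) hL hM).sub_const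
    (glPotential β₁ β₂ β' α A B)
  have hcont : ContinuousOn (fun r => r * (glPotential β₁ β₂ β' α (f r) (g r)
      - glPotential β₁ β₂ β' α A B)) (Ioi 0) := by
    have := hf.continuousOn; have := hg.continuousOn; unfold glPotential; fun_prop
  rw [integral_Ioi_of_hasDerivAt_of_tendsto_nhdsGT (fun r hr => hasDerivAt_pohozaev hf hg hr)
    (integrableOn_Ioi_of_tendsto_nhdsGT_of_isBigO_rpow hcont (by simpa using hid.mul hW0)
      (isBigO_self_mul_rpow_of_isBigO hW) (by norm_num))
    (tendsto_pohozaev (by simpa using (hid.pow 2).mul hW0) hL hM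
      (by simpa [sq, mul_assoc] using hid.mul hf'_0) (by simpa [sq, mul_assoc] using hid.mul hg'_0))
    (tendsto_pohozaev (tendsto_sq_mul_of_isBigO hW) hf_lim hg_lim hf'_top hg'_top)]
  linear_combination (-(L / 2)) * hL0 - (M / 2) * hM0

/-- Pohozaev-type quantization identity (Theorem 2.2):
∫₀^∞ r (V(f,g) - V(A,B)) dr = (n²A² + m²B²)/2. -/
theorem tcgl_quantization (n m : ℕ) (β₁ β₂ β' α A B : ℝ)
    (V : ℝ → ℝ → ℝ)
    (hV : ∀ x y, V x y = β₁ / 2 * (x ^ 2 - 1) ^ 2 + β₂ / 2 * y ^ 4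
        + β' * x ^ 2 * y ^ 2 - α * y ^ 2)
    (f g : ℝ → ℝ)
    (hf_smooth : ContDiffOn ℝ 2 f (Ioi 0)) (hg_smooth : ContDiffOn ℝ 2 g (Ioi 0))
    (hf_ode : ∀ r ∈ Ioi (0:ℝ),
      deriv (deriv f) r + deriv f r / r - ((n : ℝ) ^ 2 / r ^ 2) * f r
        = f r * (β₁ * ((f r) ^ 2 - 1) + β' * (g r) ^ 2))
    (hg_ode : ∀ r ∈ Ioi (0:ℝ),
      deriv (deriv g) r + deriv g r / r - ((m : ℝ) ^ 2 / r ^ 2) * g r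
        = g r * (β₂ * (g r) ^ 2 - α + β' * (f r) ^ 2))
    (hf_lim : Tendsto f atTop (nhds A)) (hg_lim : Tendsto g atTop (nhds B))
    (hf_asym : (fun r => f r - A) =O[atTop] fun r => r⁻¹ ^ 2)
    (hg_asym : (fun r => g r - B) =O[atTop] fun r => r⁻¹ ^ 2)
    (hf'_top : Tendsto (fun r => r ^ 2 * (deriv f r) ^ 2) atTop (nhds 0))
    (hg'_top : Tendsto (fun r => r ^ 2 * (deriv g r) ^ 2) atTop (nhds 0))
    (hf0 : f 0 * (n : ℝ) = 0) (hg0 : g 0 * (m : ℝ) = 0)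
    (hf'_0 : Tendsto (fun r => r * (deriv f r) ^ 2) (nhdsWithin 0 (Ioi 0)) (nhds 0))
    (hg'_0 : Tendsto (fun r => r * (deriv g r) ^ 2) (nhdsWithin 0 (Ioi 0)) (nhds 0)) :
    ∫ r in Ioi (0:ℝ), r * (V (f r) (g r) - V A B)
      = ((n : ℝ) ^ 2 * A ^ 2 + (m : ℝ) ^ 2 * B ^ 2) / 2 :=
  tcgl_quantization_general n m β₁ β₂ β' α A B V hV f g hf_smooth hg_smooth hf_ode hg_ode hf_lim
    hg_lim hf_asym hg_asym hf'_top hg'_top hf'_0 hg'_0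
end

section
/- Let n ≥ 1 and let f : [0,∞) → [0,1) be an increasing C² solution on (0,∞) of f'' + f'/r - (n²/r²)f = f[β₁(f²-1) + β'g²] with β₁, β' > 0, 0 ≤ f < 1, f' > 0, and f increasing bounded by 1. Then lim_{r→∞} f(r) = 1, provided g(r) → 0 as r → ∞. -/
/-!
Since `f` is increasing and bounded by `1`, it has a limit `L ∈ (0, 1]`. The equation says
`(r f')' / r = n² f / r² + f (β₁ (f² - 1) + β' g²)`, whose right-hand side tends to
`β₁ L (L² - 1)`. If `L < 1` this limit is negative, so `(r f')'` tends to `-∞`, hence so does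
`r f'`, contradicting `f' > 0`.
-/

open Set Filter Topology

theorem MonotoneOn.exists_tendsto_atTop {β : Type*} [ConditionallyCompleteLinearOrder β]
    [TopologicalSpace β] [OrderTopology β] {f : ℝ → β} {a : ℝ} (hf : MonotoneOn f (Ioi a))
    (hbdd : BddAbove (f '' Ioi a)) : ∃ L, Tendsto f atTop (𝓝 L) := by
  have hmem : ∀ r, max r (a + 1) ∈ Ioi a := fun r => by simp
  have hmono : Monotone fun r => f (max r (a + 1)) := fun r s hrs =>
    hf (hmem r) (hmem s) (max_le_max hrs le_rfl)
  refine ⟨_, (tendsto_atTop_ciSup hmono (hbdd.mono ?_)).congr' ?_⟩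
  · rintro _ ⟨r, rfl⟩
    exact mem_image_of_mem f (hmem r)
  · filter_upwards [eventually_ge_atTop (a + 1)] with r hr
    rw [max_eq_left hr]

theorem tendsto_atBot_of_hasDerivAt_of_tendsto_atBot {h h' : ℝ → ℝ}
    (hderiv : ∀ᶠ r in atTop, HasDerivAt h (h' r) r) (hh' : Tendsto h' atTop atBot) :
    Tendsto h atTop atBot := by
  obtain ⟨a, ha⟩ := (hderiv.and (hh'.eventually_le_atBot (-1))).exists_forall_of_atTop
  have hanti : AntitoneOn (fun r => h r + r) (Ici a) := by
    refine antitoneOn_of_hasDerivWithinAt_nonpos (convex_Ici a) (f' := fun r => h' r + 1)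
      ?_ ?_ ?_
    · exact fun r hr => ((ha r hr).1.add (hasDerivAt_id r)).continuousAt.continuousWithinAt
    · intro r hr
      rw [interior_Ici] at hr
      exact ((ha r (le_of_lt hr)).1.add (hasDerivAt_id r)).hasDerivWithinAt
    · intro r hr
      rw [interior_Ici] at hr
      linarith [(ha r (le_of_lt hr)).2]
  refine tendsto_atBot_mono' atTop ?_
    (tendsto_atBot_add_const_left atTop (h a + a) tendsto_neg_atTop_atBot)
  filter_upwards [eventually_ge_atTop a] with r hr
  linarith [hanti self_mem_Ici hr hr]

theorem hasDerivAt_mul_deriv {f : ℝ → ℝ} {r : ℝ} (hr : r ≠ 0)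
    (hf : DifferentiableAt ℝ (deriv f) r) :
    HasDerivAt (fun s => s * deriv f s) (r * (deriv (deriv f) r + deriv f r / r)) r := by
  refine ((hasDerivAt_id' r).mul hf.hasDerivAt).congr_deriv ?_
  field_simp
  ring

theorem tendsto_mul_deriv_atBot_of_radial_laplacian_tendsto_neg {f F : ℝ → ℝ} {c : ℝ}
    (hf : ContDiffOn ℝ 2 f (Ioi 0))
    (hF : ∀ r ∈ Ioi (0 : ℝ), deriv (deriv f) r + deriv f r / r = F r)
    (hF_lim : Tendsto F atTop (𝓝 c)) (hc : c < 0) :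
    Tendsto (fun r => r * deriv f r) atTop atBot := by
  have hf' : ContDiffOn ℝ 1 (deriv f) (Ioi 0) := hf.deriv_of_isOpen isOpen_Ioi (by norm_num)
  refine tendsto_atBot_of_hasDerivAt_of_tendsto_atBot (h' := fun r => r * F r) ?_
    (tendsto_id.atTop_mul_neg hc hF_lim)
  filter_upwards [eventually_gt_atTop 0] with r hr
  rw [← hF r hr]
  exact hasDerivAt_mul_deriv hr.ne'
    ((hf'.differentiableOn one_ne_zero r hr).differentiableAt (isOpen_Ioi.mem_nhds hr))

theorem tcgl_increasing_solution_tends_to_one_general (n : ℕ) (β₁ β' : ℝ)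
    (hβ₁ : 0 < β₁)
    (g : ℝ → ℝ) (hg_lim : Tendsto g atTop (nhds 0))
    (f : ℝ → ℝ) (hf_smooth : ContDiffOn ℝ 2 f (Ioi 0))
    (hf_range : ∀ r, 0 ≤ f r ∧ f r < 1)
    (hf'_pos : ∀ r ∈ Ioi (0:ℝ), 0 < deriv f r)
    (hf_ode : ∀ r ∈ Ioi (0:ℝ),
      deriv (deriv f) r + deriv f r / r - ((n : ℝ) ^ 2 / r ^ 2) * f r
        = f r * (β₁ * ((f r) ^ 2 - 1) + β' * (g r) ^ 2)) :
    Tendsto f atTop (nhds 1) := by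
  have hf_strict : StrictMonoOn f (Ioi 0) :=
    strictMonoOn_of_deriv_pos (convex_Ioi 0) hf_smooth.continuousOn (by rwa [interior_Ioi])
  obtain ⟨L, hL⟩ := hf_strict.monotoneOn.exists_tendsto_atTop
    ⟨1, by rintro _ ⟨r, -, rfl⟩; exact (hf_range r).2.le⟩
  have hL_pos : 0 < L := by
    have hf1_le : f 1 ≤ L := ge_of_tendsto hL <| (eventually_ge_atTop 1).mono fun r hr =>
      hf_strict.monotoneOn (mem_Ioi.2 one_pos) (mem_Ioi.2 (one_pos.trans_le hr)) hr
    have hf_half : f (1 / 2) < f 1 := hf_strict (by norm_num) (mem_Ioi.2 one_pos) (by norm_num)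
    linarith [(hf_range (1 / 2)).1]
  obtain rfl | hL_lt := (le_of_tendsto' hL fun r => (hf_range r).2.le).eq_or_lt
  · exact hL
  have hinvsq : Tendsto (fun r : ℝ => (n : ℝ) ^ 2 / r ^ 2) atTop (𝓝 0) :=
    tendsto_const_nhds.div_atTop (tendsto_pow_atTop two_ne_zero)
  have hreaction := (((hL.pow 2).sub_const 1).const_mul β₁).add ((hg_lim.pow 2).const_mul β')
  have hlaplacian_lim := (hinvsq.mul hL).add (hL.mul hreaction)
  simp only [zero_mul, zero_add, zero_pow two_ne_zero, mul_zero, add_zero] at hlaplacian_lim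
  have hflux := tendsto_mul_deriv_atBot_of_radial_laplacian_tendsto_neg hf_smooth
    (fun r hr => by linarith [hf_ode r hr]) hlaplacian_lim
    (mul_neg_of_pos_of_neg hL_pos (mul_neg_of_pos_of_neg hβ₁ (by nlinarith)))
  obtain ⟨r, hr_neg, hr_pos⟩ := ((hflux.eventually_lt_atBot 0).and (eventually_gt_atTop 0)).exists
  linarith [mul_pos hr_pos (hf'_pos r hr_pos)]

/-- Step 4 of Lemma 3.2: an increasing solution bounded by 1 tends to 1 at infinity. -/
theorem tcgl_increasing_solution_tends_to_one (n : ℕ) (hn : 1 ≤ n) (β₁ β' : ℝ)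
    (hβ₁ : 0 < β₁) (hβ' : 0 < β')
    (g : ℝ → ℝ) (hg_lim : Tendsto g atTop (nhds 0))
    (f : ℝ → ℝ) (hf_smooth : ContDiffOn ℝ 2 f (Ioi 0))
    (hf_range : ∀ r, 0 ≤ f r ∧ f r < 1)
    (hf_mono : MonotoneOn f (Ioi 0))
    (hf'_pos : ∀ r ∈ Ioi (0:ℝ), 0 < deriv f r)
    (hf_ode : ∀ r ∈ Ioi (0:ℝ),
      deriv (deriv f) r + deriv f r / r - ((n : ℝ) ^ 2 / r ^ 2) * f r
        = f r * (β₁ * ((f r) ^ 2 - 1) + β' * (g r) ^ 2)) :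
    Tendsto f atTop (nhds 1) :=
  tcgl_increasing_solution_tends_to_one_general n β₁ β' hβ₁ g hg_lim f hf_smooth hf_range hf'_pos
    hf_ode
end

section
/- Let m ≥ 1, C > 0, and consider the integral operator (Tg)(r) = C rᵐ + (1/(2m)) ∫₀^r (rᵐ/s^{m-1} - s^{m+1}/rᵐ) g(s) h(s) ds where h is continuous and bounded on [0,δ]. Then for δ sufficiently small, T is a contraction on the closed ball {g ∈ C[0,δ] : |g(r)| ≤ 2C rᵐ} with weighted sup norm ‖g‖ = sup_{r∈(0,δ]} |g(r)|/rᵐ, and hence has a unique fixed point g with g(r) = C rᵐ + O(r^{m+2}) as r → 0⁺. -/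
open Set intervalIntegral

open MeasureTheory Filter Topology
open scoped BoundedContinuousFunction NNReal

/-!
Writing `g = rᵐ u` turns `T` (`integralOp`) into
`u ↦ C + (1/(2m)) ∫₀^r s (1 - (s/r)^{2m}) u(s) h(s) ds` (`reducedOp`), and
the weighted norm of `g` becomes the sup norm of `u` on `(0, δ]`. The new kernel lies in `[0, s]`,
so with `|h| ≤ M` the integral term is at most `‖u‖ M r² / (2m)`; once `M δ² ≤ m` the map is
a `1/2`-contraction of the bounded continuous functions on `(0, δ]`. Its Banach fixed point `u`
satisfies `‖u‖ ≤ |C| + ‖u‖ / 2`, i.e. `‖u‖ ≤ 2C`, and `|u - C| ≤ C M r² / m` gives the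
`O(r^{m+2})` term; any other solution `g₂` in the ball yields the fixed point `g₂ / rᵐ`.
-/

noncomputable def integralOp (m : ℕ) (C : ℝ) (h g : ℝ → ℝ) (r : ℝ) : ℝ :=
  C * r ^ m + 1 / (2 * (m : ℝ)) *
    ∫ s in (0:ℝ)..r, (r ^ m / s ^ (m - 1) - s ^ (m + 1) / r ^ m) * g s * h s

noncomputable def reducedKernel (m : ℕ) (r s : ℝ) : ℝ := s * (1 - (s / r) ^ (2 * m))

noncomputable def reducedOp (m : ℕ) (C : ℝ) (h u : ℝ → ℝ) (r : ℝ) : ℝ :=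
  C + 1 / (2 * (m : ℝ)) * ∫ s in (0:ℝ)..r, reducedKernel m r s * (u s * h s)

lemma abs_reducedKernel_le {m : ℕ} {r s : ℝ} (hs : 0 ≤ s) (hsr : s ≤ r) :
    |reducedKernel m r s| ≤ s := by
  have hq : 0 ≤ s / r := div_nonneg hs (hs.trans hsr)
  have h₀ : 0 ≤ (s / r) ^ (2 * m) := pow_nonneg hq _
  have h₁ : (s / r) ^ (2 * m) ≤ 1 := pow_le_one₀ hq (div_le_one_of_le₀ hsr (hs.trans hsr))
  rw [reducedKernel, abs_of_nonneg (by nlinarith)]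
  nlinarith

lemma pow_mul_reducedKernel {m : ℕ} (hm : 0 < m) {r s : ℝ} (hr : 0 < r) (hs : 0 < s) :
    r ^ m * reducedKernel m r s = (r ^ m / s ^ (m - 1) - s ^ (m + 1) / r ^ m) * s ^ m := by
  obtain ⟨k, rfl⟩ : ∃ k, m = k + 1 := ⟨m - 1, by omega⟩
  rw [reducedKernel, Nat.add_sub_cancel, div_pow]
  field_simp
  ring

lemma abs_integral_reducedKernel_mul_le {m : ℕ} {r B : ℝ} {f : ℝ → ℝ} (hr : 0 ≤ r)
    (hf : ∀ s ∈ Ioc 0 r, |f s| ≤ B) :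
    |∫ s in (0:ℝ)..r, reducedKernel m r s * f s| ≤ B * r ^ 2 := by
  have hbound : ∀ s ∈ uIoc 0 r, ‖reducedKernel m r s * f s‖ ≤ r * B := by
    intro s hs
    rw [uIoc_of_le hr] at hs
    rw [Real.norm_eq_abs, abs_mul]
    exact mul_le_mul ((abs_reducedKernel_le hs.1.le hs.2).trans hs.2) (hf s hs) (abs_nonneg _) hr
  calc _ ≤ r * B * |r - 0| := norm_integral_le_of_norm_le_const hbound
    _ = B * r ^ 2 := by rw [sub_zero, abs_of_nonneg hr]; ring

lemma ContinuousOn.intervalIntegrable_of_abs_le {f : ℝ → ℝ} {a b B : ℝ} (hab : a ≤ b)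
    (hf : ContinuousOn f (Ioc a b)) (hB : ∀ s ∈ Ioc a b, |f s| ≤ B) :
    IntervalIntegrable f volume a b :=
  (intervalIntegrable_iff_integrableOn_Ioc_of_le hab).2 <|
    .of_bound measure_Ioc_lt_top (hf.aestronglyMeasurable measurableSet_Ioc) B
      ((ae_restrict_iff' measurableSet_Ioc).2 (ae_of_all _ hB))

lemma intervalIntegrable_reducedKernel_mul {m : ℕ} {r B : ℝ} {f : ℝ → ℝ} (hr : 0 ≤ r)
    (hf : ContinuousOn f (Ioc 0 r)) (hB : ∀ s ∈ Ioc 0 r, |f s| ≤ B) :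
    IntervalIntegrable (fun s => reducedKernel m r s * f s) volume 0 r := by
  refine ContinuousOn.intervalIntegrable_of_abs_le (B := r * B) hr ?_ fun s hs => ?_
  · exact (Continuous.continuousOn (by unfold reducedKernel; fun_prop)).mul hf
  · rw [abs_mul]
    exact mul_le_mul ((abs_reducedKernel_le hs.1.le hs.2).trans hs.2) (hB s hs) (abs_nonneg _) hr

lemma continuousOn_integral_reducedKernel_mul {m : ℕ} {δ B : ℝ} {f : ℝ → ℝ} (hδ : 0 ≤ δ)
    (hf : ContinuousOn f (Ioc 0 δ)) (hB : ∀ s ∈ Ioc 0 δ, |f s| ≤ B) :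
    ContinuousOn (fun r => ∫ s in (0:ℝ)..r, reducedKernel m r s * f s) (Ioc 0 δ) := by
  have hint (n : ℕ) {r : ℝ} (hr : r ∈ Icc 0 δ) :
      IntervalIntegrable (fun s => s ^ n * f s) volume 0 r :=
    ((continuousOn_pow n).mul (hf.mono (Ioc_subset_Ioc_right hr.2))).intervalIntegrable_of_abs_le
      (B := δ ^ n * B) hr.1 fun s hs => by
        have hsδ : s ∈ Ioc 0 δ := ⟨hs.1, hs.2.trans hr.2⟩
        rw [abs_mul, abs_pow, abs_of_pos hs.1]
        exact mul_le_mul (pow_le_pow_left₀ hs.1.le hsδ.2 n) (hB s hsδ) (abs_nonneg _)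
          (by positivity)
  have hprim (n : ℕ) : ContinuousOn (fun r => ∫ s in (0:ℝ)..r, s ^ n * f s) (Ioc 0 δ) := by
    refine (continuousOn_primitive_interval' (hint n ⟨hδ, le_rfl⟩) left_mem_uIcc).mono ?_
    rw [uIcc_of_le hδ]
    exact Ioc_subset_Icc_self
  have hsplit : EqOn (fun r => (∫ s in (0:ℝ)..r, s ^ 1 * f s) -
      (r ^ (2 * m))⁻¹ * ∫ s in (0:ℝ)..r, s ^ (2 * m + 1) * f s)
      (fun r => ∫ s in (0:ℝ)..r, reducedKernel m r s * f s) (Ioc 0 δ) := by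
    intro r hr
    dsimp only
    rw [← intervalIntegral.integral_const_mul,
      ← integral_sub (hint 1 (Ioc_subset_Icc_self hr)) ((hint _ (Ioc_subset_Icc_self hr)).const_mul _)]
    refine integral_congr fun s _ => ?_
    simp only [reducedKernel, div_pow]
    ring
  refine ContinuousOn.congr ?_ hsplit.symm
  exact (hprim 1).sub (((continuousOn_pow _).inv₀ fun r hr => pow_ne_zero _ hr.1.ne').mul (hprim _))

section ReducedOp

variable {m : ℕ} {C : ℝ} {h u v : ℝ → ℝ}

lemma reducedOp_congr {r : ℝ} (hr : 0 ≤ r) (huv : EqOn u v (Ioc 0 r)) :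
    reducedOp m C h u r = reducedOp m C h v r := by
  refine congrArg (C + 1 / (2 * (m : ℝ)) * ·) (intervalIntegral.integral_congr_ae (ae_of_all _ ?_))
  intro s hs
  rw [uIoc_of_le hr] at hs
  rw [huv hs]

lemma reducedOp_sub {r : ℝ}
    (hu : IntervalIntegrable (fun s => reducedKernel m r s * (u s * h s)) volume 0 r)
    (hv : IntervalIntegrable (fun s => reducedKernel m r s * (v s * h s)) volume 0 r) :
    reducedOp m C h u r - reducedOp m C h v r = reducedOp m C h (u - v) r - C := by
  simp only [reducedOp, Pi.sub_apply, sub_mul, mul_sub, integral_sub hu hv]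
  ring

lemma continuousOn_reducedOp {δ B M : ℝ} (hδ : 0 ≤ δ) (hu : ContinuousOn u (Ioc 0 δ))
    (hh : ContinuousOn h (Ioc 0 δ)) (hu_bd : ∀ s ∈ Ioc 0 δ, |u s| ≤ B)
    (hh_bd : ∀ s ∈ Ioc 0 δ, |h s| ≤ M) :
    ContinuousOn (reducedOp m C h u) (Ioc 0 δ) :=
  continuousOn_const.add <| continuousOn_const.mul <|
    continuousOn_integral_reducedKernel_mul hδ (hu.mul hh) fun s hs => by
      rw [abs_mul]
      exact mul_le_mul (hu_bd s hs) (hh_bd s hs) (abs_nonneg _) ((abs_nonneg _).trans (hu_bd s hs))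

lemma abs_reducedOp_sub_const_le {r B M : ℝ} (hr : 0 ≤ r) (hu : ∀ s ∈ Ioc 0 r, |u s| ≤ B)
    (hh : ∀ s ∈ Ioc 0 r, |h s| ≤ M) :
    |reducedOp m C h u r - C| ≤ B * M * r ^ 2 / (2 * m) := by
  have hint := abs_integral_reducedKernel_mul_le (m := m) hr (B := B * M) fun s hs => by
    rw [abs_mul]
    exact mul_le_mul (hu s hs) (hh s hs) (abs_nonneg _) ((abs_nonneg _).trans (hu s hs))
  rw [reducedOp, add_sub_cancel_left, abs_mul, abs_of_nonneg (by positivity)]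
  calc 1 / (2 * (m : ℝ)) * |∫ s in (0:ℝ)..r, reducedKernel m r s * (u s * h s)|
      ≤ 1 / (2 * m) * (B * M * r ^ 2) := by gcongr
    _ = B * M * r ^ 2 / (2 * m) := by ring

lemma abs_reducedOp_sub_const_le_half {r δ B M : ℝ} (hm : 0 < m) (hB : 0 ≤ B) (hM : 0 ≤ M)
    (hsmall : M * δ ^ 2 ≤ m) (hr : r ∈ Icc 0 δ) (hu : ∀ s ∈ Ioc 0 r, |u s| ≤ B)
    (hh : ∀ s ∈ Ioc 0 r, |h s| ≤ M) :
    |reducedOp m C h u r - C| ≤ B / 2 := by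
  have hMr : M * r ^ 2 ≤ m :=
    (mul_le_mul_of_nonneg_left (pow_le_pow_left₀ hr.1 hr.2 2) hM).trans hsmall
  calc |reducedOp m C h u r - C| ≤ B * (M * r ^ 2) / (2 * m) := by
        rw [← mul_assoc]; exact abs_reducedOp_sub_const_le hr.1 hu hh
    _ ≤ B * m / (2 * m) := by gcongr
    _ = B / 2 := by field_simp

end ReducedOp

section FixedPoint

variable {m : ℕ} {C δ M : ℝ} {h : ℝ → ℝ}

noncomputable def extendZero (φ : Ioc (0:ℝ) δ →ᵇ ℝ) (s : ℝ) : ℝ :=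
  if hs : s ∈ Ioc 0 δ then φ ⟨s, hs⟩ else 0

lemma extendZero_of_mem (φ : Ioc (0:ℝ) δ →ᵇ ℝ) {s : ℝ} (hs : s ∈ Ioc 0 δ) :
    extendZero φ s = φ ⟨s, hs⟩ :=
  dif_pos hs

lemma abs_extendZero_le (φ : Ioc (0:ℝ) δ →ᵇ ℝ) (s : ℝ) : |extendZero φ s| ≤ ‖φ‖ := by
  unfold extendZero
  split_ifs
  · exact φ.norm_coe_le_norm _
  · simp

lemma continuousOn_extendZero (φ : Ioc (0:ℝ) δ →ᵇ ℝ) : ContinuousOn (extendZero φ) (Ioc 0 δ) := by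
  rw [continuousOn_iff_continuous_domRestrict]
  convert φ.continuous
  ext t
  exact extendZero_of_mem φ t.2

lemma abs_reducedOp_extendZero_sub_le (hm : 0 < m) (hM : 0 ≤ M) (hsmall : M * δ ^ 2 ≤ m)
    (hh_cont : ContinuousOn h (Ioc 0 δ)) (hh_bd : ∀ s ∈ Ioc 0 δ, |h s| ≤ M)
    (φ ψ : Ioc (0:ℝ) δ →ᵇ ℝ) {r : ℝ} (hr : r ∈ Ioc 0 δ) :
    |reducedOp m C h (extendZero φ) r - reducedOp m C h (extendZero ψ) r| ≤ dist φ ψ / 2 := by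
  have hsub : Ioc 0 r ⊆ Ioc 0 δ := Ioc_subset_Ioc_right hr.2
  have hint (χ : Ioc (0:ℝ) δ →ᵇ ℝ) := intervalIntegrable_reducedKernel_mul (m := m) hr.1.le
    (((continuousOn_extendZero χ).mul hh_cont).mono hsub) (B := ‖χ‖ * M) fun s hs => by
      rw [Pi.mul_apply, abs_mul]
      exact mul_le_mul (abs_extendZero_le χ s) (hh_bd s (hsub hs)) (abs_nonneg _) (norm_nonneg χ)
  have hdiff : ∀ s ∈ Ioc 0 r, |(extendZero φ - extendZero ψ) s| ≤ dist φ ψ := by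
    intro s hs
    rw [Pi.sub_apply, extendZero_of_mem φ (hsub hs), extendZero_of_mem ψ (hsub hs),
      ← Real.dist_eq]
    exact BoundedContinuousFunction.dist_coe_le_dist _
  rw [reducedOp_sub (hint φ) (hint ψ)]
  exact abs_reducedOp_sub_const_le_half hm dist_nonneg hM hsmall (Ioc_subset_Icc_self hr) hdiff
    fun s hs => hh_bd s (hsub hs)

lemma exists_contractingWith_reducedOp (hm : 0 < m) (hδ : 0 ≤ δ) (hM : 0 ≤ M)
    (hsmall : M * δ ^ 2 ≤ m) (hh_cont : ContinuousOn h (Ioc 0 δ))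
    (hh_bd : ∀ s ∈ Ioc 0 δ, |h s| ≤ M) :
    ∃ S : (Ioc (0:ℝ) δ →ᵇ ℝ) → (Ioc (0:ℝ) δ →ᵇ ℝ), ContractingWith (1 / 2) S ∧
      (∀ φ, ‖S φ‖ ≤ |C| + ‖φ‖ / 2) ∧ ∀ φ t, S φ t = reducedOp m C h (extendZero φ) t := by
  have hbd (φ : Ioc (0:ℝ) δ →ᵇ ℝ) (t : Ioc (0:ℝ) δ) :
      ‖reducedOp m C h (extendZero φ) t‖ ≤ |C| + ‖φ‖ / 2 := by
    have hhalf := abs_reducedOp_sub_const_le_half (C := C) hm (norm_nonneg φ) hM hsmall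
      (Ioc_subset_Icc_self t.2) (fun s _ => abs_extendZero_le φ s)
      fun s hs => hh_bd s (Ioc_subset_Ioc_right t.2.2 hs)
    have := abs_sub_abs_le_abs_sub (reducedOp m C h (extendZero φ) t) C
    rw [Real.norm_eq_abs]
    linarith
  have hcont (φ : Ioc (0:ℝ) δ →ᵇ ℝ) : Continuous fun t : Ioc (0:ℝ) δ =>
      reducedOp m C h (extendZero φ) t :=
    continuousOn_iff_continuous_domRestrict.1 <| continuousOn_reducedOp hδ
      (continuousOn_extendZero φ) hh_cont (fun s _ => abs_extendZero_le φ s) hh_bd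
  let S φ := BoundedContinuousFunction.ofNormedAddCommGroup _ (hcont φ) _ (hbd φ)
  refine ⟨S, ⟨by norm_num, ?_⟩, fun φ => ?_, fun _ _ => rfl⟩
  · refine LipschitzWith.of_dist_le_mul fun φ ψ =>
      (BoundedContinuousFunction.dist_le (by positivity)).2 fun t => ?_
    rw [Real.dist_eq, NNReal.coe_div, NNReal.coe_one, div_mul_eq_mul_div, one_mul]
    exact abs_reducedOp_extendZero_sub_le hm hM hsmall hh_cont hh_bd φ ψ t.2
  · exact (BoundedContinuousFunction.norm_le (by positivity)).2 (hbd φ)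

theorem exists_fixedPoint_reducedOp (hm : 0 < m) (hδ : 0 ≤ δ) (hM : 0 ≤ M)
    (hsmall : M * δ ^ 2 ≤ m) (hh_cont : ContinuousOn h (Ioc 0 δ))
    (hh_bd : ∀ s ∈ Ioc 0 δ, |h s| ≤ M) :
    ∃ u : ℝ → ℝ, ContinuousOn u (Ioc 0 δ) ∧ (∀ s, |u s| ≤ 2 * |C|) ∧
      (∀ r ∈ Ioc 0 δ, reducedOp m C h u r = u r) ∧
      ∀ v : ℝ → ℝ, ContinuousOn v (Ioc 0 δ) → (∃ B, ∀ s ∈ Ioc 0 δ, |v s| ≤ B) →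
        (∀ r ∈ Ioc 0 δ, reducedOp m C h v r = v r) → EqOn v u (Ioc 0 δ) := by
  obtain ⟨S, hS, hS_norm, hS_apply⟩ :=
    exists_contractingWith_reducedOp (C := C) hm hδ hM hsmall hh_cont hh_bd
  set φ := hS.fixedPoint S
  have hφ : S φ = φ := hS.fixedPoint_isFixedPt
  have hφ_norm : ‖φ‖ ≤ 2 * |C| := by
    have := hS_norm φ
    rw [hφ] at this
    linarith
  refine ⟨extendZero φ, continuousOn_extendZero φ,
    fun s => (abs_extendZero_le φ s).trans hφ_norm, fun r hr => ?_, ?_⟩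
  · rw [← hS_apply φ ⟨r, hr⟩, hφ, extendZero_of_mem φ hr]
  · rintro v hv_cont ⟨B, hB⟩ hv_fix
    let ψ : Ioc (0:ℝ) δ →ᵇ ℝ := .ofNormedAddCommGroup _
      (continuousOn_iff_continuous_domRestrict.1 hv_cont) B fun t => hB t t.2
    have hψ : EqOn (extendZero ψ) v (Ioc 0 δ) := fun s hs => extendZero_of_mem ψ hs
    have hψ_fix : S ψ = ψ := by
      ext t
      rw [hS_apply, reducedOp_congr t.2.1.le (hψ.mono (Ioc_subset_Ioc_right t.2.2)),
        hv_fix t t.2]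
      rfl
    intro s hs
    rw [← hψ hs, hS.fixedPoint_unique hψ_fix]

end FixedPoint

section Weighted

variable {m : ℕ} {C δ : ℝ} {h u : ℝ → ℝ}

lemma integralOp_eq_pow_mul_reducedOp (hm : 0 < m) {G : ℝ → ℝ} {r : ℝ} (hr : 0 < r)
    (hG : ∀ s ∈ Ioc 0 r, G s = s ^ m * u s) :
    integralOp m C h G r = r ^ m * reducedOp m C h u r := by
  have hint : r ^ m * ∫ s in (0:ℝ)..r, reducedKernel m r s * (u s * h s) =
      ∫ s in (0:ℝ)..r, (r ^ m / s ^ (m - 1) - s ^ (m + 1) / r ^ m) * G s * h s := by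
    rw [← intervalIntegral.integral_const_mul]
    refine intervalIntegral.integral_congr_ae (ae_of_all _ fun s hs => ?_)
    rw [uIoc_of_le hr.le] at hs
    rw [hG s hs, ← mul_assoc, pow_mul_reducedKernel hm hr hs.1]
    ring
  rw [integralOp, reducedOp, ← hint]
  ring

lemma pow_mul_eq_integralOp (hm : 0 < m) (hfix : ∀ r ∈ Ioc 0 δ, reducedOp m C h u r = u r) :
    ∀ r ∈ Icc 0 δ, r ^ m * u r = integralOp m C h (fun s => s ^ m * u s) r := by
  intro r hr
  rcases hr.1.eq_or_lt with rfl | hr0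
  · simp [integralOp, zero_pow (by omega : m ≠ 0)]
  · rw [integralOp_eq_pow_mul_reducedOp hm hr0 fun _ _ => rfl, hfix r ⟨hr0, hr.2⟩]

lemma reducedOp_div_pow_eq (hm : 0 < m) {g : ℝ → ℝ}
    (hg : ∀ r ∈ Ioc 0 δ, g r = integralOp m C h g r) :
    ∀ r ∈ Ioc 0 δ, reducedOp m C h (fun s => g s / s ^ m) r = g r / r ^ m := by
  intro r hr
  have hG : ∀ s ∈ Ioc 0 r, g s = s ^ m * (g s / s ^ m) := fun s hs =>
    (mul_div_cancel₀ _ (pow_ne_zero m hs.1.ne')).symm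
  rw [eq_div_iff (pow_ne_zero m hr.1.ne'), mul_comm, ← integralOp_eq_pow_mul_reducedOp hm hr.1 hG,
    ← hg r hr]

lemma continuousOn_Icc_pow_mul (hm : 0 < m) (hδ : 0 ≤ δ) {B : ℝ} (hu : ContinuousOn u (Ioc 0 δ))
    (hB : ∀ s ∈ Ioc 0 δ, |u s| ≤ B) :
    ContinuousOn (fun r => r ^ m * u r) (Icc 0 δ) := by
  have hcont : ContinuousOn (fun r => r ^ m * u r) (Ioc 0 δ) := (continuousOn_pow m).mul hu
  rw [← Ioc_insert_left hδ]
  rintro r (rfl | hr)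
  · rw [continuousWithinAt_insert_self, ContinuousWithinAt, zero_pow hm.ne', zero_mul]
    have hlim : Tendsto (fun r : ℝ => B * |r| ^ m) (𝓝[Ioc 0 δ] 0) (𝓝 0) := by
      have hc : Continuous fun r : ℝ => B * |r| ^ m := by fun_prop
      simpa [zero_pow hm.ne'] using (hc.tendsto 0).mono_left nhdsWithin_le_nhds
    refine squeeze_zero_norm' (eventually_nhdsWithin_of_forall fun s hs => ?_) hlim
    rw [Real.norm_eq_abs, abs_mul, abs_pow, mul_comm]
    exact mul_le_mul_of_nonneg_right (hB s hs) (by positivity)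
  · exact continuousWithinAt_insert.2 (hcont r hr)

lemma abs_pow_mul_sub_le (hm : 0 < m) {B M : ℝ} (hfix : ∀ r ∈ Ioc 0 δ, reducedOp m C h u r = u r)
    (hu : ∀ s ∈ Ioc 0 δ, |u s| ≤ B) (hh : ∀ s ∈ Ioc 0 δ, |h s| ≤ M) :
    ∀ r ∈ Icc 0 δ, |r ^ m * u r - C * r ^ m| ≤ B * M / (2 * m) * r ^ (m + 2) := by
  intro r hr
  rcases hr.1.eq_or_lt with rfl | hr0
  · simp [zero_pow hm.ne']
  · have hsub : Ioc 0 r ⊆ Ioc 0 δ := Ioc_subset_Ioc_right hr.2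
    have hS := abs_reducedOp_sub_const_le (m := m) (C := C) hr.1 (fun s hs => hu s (hsub hs))
      (fun s hs => hh s (hsub hs))
    rw [hfix r ⟨hr0, hr.2⟩] at hS
    calc |r ^ m * u r - C * r ^ m| = r ^ m * |u r - C| := by
          rw [mul_comm C, ← mul_sub, abs_mul, abs_of_pos (pow_pos hr0 m)]
      _ ≤ r ^ m * (B * M * r ^ 2 / (2 * m)) := by gcongr
      _ = B * M / (2 * m) * r ^ (m + 2) := by ring

end Weighted

lemma exists_mem_Ioc_mul_sq_le {δ₀ c : ℝ} (hδ₀ : 0 < δ₀) (hc : 0 < c) (M : ℝ) :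
    ∃ δ ∈ Ioc 0 δ₀, M * δ ^ 2 ≤ c := by
  have hlim : Tendsto (fun δ : ℝ => M * δ ^ 2) (𝓝[>] 0) (𝓝 0) := by
    have hcont : Continuous fun δ : ℝ => M * δ ^ 2 := by fun_prop
    simpa using (hcont.tendsto 0).mono_left nhdsWithin_le_nhds
  exact (Filter.Eventually.and (Ioc_mem_nhdsGT hδ₀) (hlim.eventually (ge_mem_nhds hc))).exists

theorem tcgl_local_existence_contraction_general (m : ℕ) (hm : 1 ≤ m) (C : ℝ) (hC : 0 < C)
    (δ₀ : ℝ) (hδ₀ : 0 < δ₀)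
    (h : ℝ → ℝ) (hh_cont : ContinuousOn h (Icc 0 δ₀)) :
    ∃ δ : ℝ, 0 < δ ∧ δ ≤ δ₀ ∧
      ∃ g : ℝ → ℝ, ContinuousOn g (Icc 0 δ) ∧
        (∀ r ∈ Icc (0:ℝ) δ, |g r| ≤ 2 * C * r ^ m) ∧
        (∀ r ∈ Icc (0:ℝ) δ,
          g r = C * r ^ m + (1 / (2 * (m : ℝ))) *
            ∫ s in (0:ℝ)..r, (r ^ m / s ^ (m - 1) - s ^ (m + 1) / r ^ m) * g s * h s) ∧
        (∃ K : ℝ, ∀ r ∈ Icc (0:ℝ) δ, |g r - C * r ^ m| ≤ K * r ^ (m + 2)) ∧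
        ∀ g₂ : ℝ → ℝ, ContinuousOn g₂ (Icc 0 δ) →
          (∀ r ∈ Icc (0:ℝ) δ, |g₂ r| ≤ 2 * C * r ^ m) →
          (∀ r ∈ Icc (0:ℝ) δ,
            g₂ r = C * r ^ m + (1 / (2 * (m : ℝ))) *
              ∫ s in (0:ℝ)..r, (r ^ m / s ^ (m - 1) - s ^ (m + 1) / r ^ m) * g₂ s * h s) →
          ∀ r ∈ Icc (0:ℝ) δ, g₂ r = g r := by
  obtain ⟨M, hM⟩ := isCompact_Icc.exists_bound_of_continuousOn hh_cont
  have hM₀ : 0 ≤ M := (norm_nonneg _).trans (hM 0 ⟨le_rfl, hδ₀.le⟩)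
  obtain ⟨δ, ⟨hδ, hδδ₀⟩, hsmall⟩ := exists_mem_Ioc_mul_sq_le hδ₀ (Nat.cast_pos.2 hm) M
  have hIoc : Ioc 0 δ ⊆ Icc 0 δ₀ := Ioc_subset_Icc_self.trans (Icc_subset_Icc_right hδδ₀)
  have hh_bd : ∀ s ∈ Ioc 0 δ, |h s| ≤ M := fun s hs => hM s (hIoc hs)
  obtain ⟨u, hu_cont, hu_bd, hu_fix, hu_uniq⟩ :=
    exists_fixedPoint_reducedOp (C := C) hm hδ.le hM₀ hsmall (hh_cont.mono hIoc) hh_bd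
  rw [abs_of_pos hC] at hu_bd
  refine ⟨δ, hδ, hδδ₀, fun r => r ^ m * u r,
    continuousOn_Icc_pow_mul hm hδ.le hu_cont fun s _ => hu_bd s, fun r hr => ?_,
    pow_mul_eq_integralOp hm hu_fix,
    ⟨_, abs_pow_mul_sub_le hm hu_fix (fun s _ => hu_bd s) hh_bd⟩, fun g₂ hg₂_cont hg₂_bd hg₂_eq => ?_⟩
  · rw [abs_mul, abs_of_nonneg (pow_nonneg hr.1 m), mul_comm]
    exact mul_le_mul_of_nonneg_right (hu_bd r) (pow_nonneg hr.1 m)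
  have hv_bd : ∀ s ∈ Ioc 0 δ, |g₂ s / s ^ m| ≤ 2 * C := fun s hs => by
    rw [abs_div, abs_of_pos (pow_pos hs.1 m), div_le_iff₀ (pow_pos hs.1 m)]
    exact hg₂_bd s (Ioc_subset_Icc_self hs)
  have hv := hu_uniq (fun s => g₂ s / s ^ m)
    ((hg₂_cont.mono Ioc_subset_Icc_self).div (continuousOn_pow m) fun s hs => pow_ne_zero m hs.1.ne')
    ⟨_, hv_bd⟩ (reducedOp_div_pow_eq hm fun r hr => hg₂_eq r (Ioc_subset_Icc_self hr))
  intro r hr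
  rcases hr.1.eq_or_lt with rfl | hr0
  · simpa [zero_pow (by omega : m ≠ 0)] using hg₂_bd 0 hr
  · show g₂ r = r ^ m * u r
    rw [← hv ⟨hr0, hr.2⟩, mul_div_cancel₀ _ (pow_ne_zero m hr0.ne')]

/-- Local existence and uniqueness near r = 0 by contraction: for δ small the integral
operator Tg(r) = C rᵐ + (1/(2m))∫₀^r (rᵐ/s^{m-1} - s^{m+1}/rᵐ) g h ds has a unique fixed
point in the ball {|g(r)| ≤ 2C rᵐ}, and the fixed point satisfies g = C rᵐ + O(r^{m+2}). -/
theorem tcgl_local_existence_contraction (m : ℕ) (hm : 1 ≤ m) (C : ℝ) (hC : 0 < C)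
    (δ₀ : ℝ) (hδ₀ : 0 < δ₀)
    (h : ℝ → ℝ) (hh_cont : ContinuousOn h (Icc 0 δ₀))
    (hh_bdd : ∃ M, ∀ s ∈ Icc (0:ℝ) δ₀, |h s| ≤ M) :
    ∃ δ : ℝ, 0 < δ ∧ δ ≤ δ₀ ∧
      ∃ g : ℝ → ℝ, ContinuousOn g (Icc 0 δ) ∧
        (∀ r ∈ Icc (0:ℝ) δ, |g r| ≤ 2 * C * r ^ m) ∧
        (∀ r ∈ Icc (0:ℝ) δ,
          g r = C * r ^ m + (1 / (2 * (m : ℝ))) *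
            ∫ s in (0:ℝ)..r, (r ^ m / s ^ (m - 1) - s ^ (m + 1) / r ^ m) * g s * h s) ∧
        (∃ K : ℝ, ∀ r ∈ Icc (0:ℝ) δ, |g r - C * r ^ m| ≤ K * r ^ (m + 2)) ∧
        ∀ g₂ : ℝ → ℝ, ContinuousOn g₂ (Icc 0 δ) →
          (∀ r ∈ Icc (0:ℝ) δ, |g₂ r| ≤ 2 * C * r ^ m) →
          (∀ r ∈ Icc (0:ℝ) δ,
            g₂ r = C * r ^ m + (1 / (2 * (m : ℝ))) *
              ∫ s in (0:ℝ)..r, (r ^ m / s ^ (m - 1) - s ^ (m + 1) / r ^ m) * g₂ s * h s) →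
          ∀ r ∈ Icc (0:ℝ) δ, g₂ r = g r :=
  tcgl_local_existence_contraction_general m hm C hC δ₀ hδ₀ h hh_cont
end
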